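/- Let w ∈ ℝ^d have strictly positive entries, x₀ ∈ ℝ^d be nonzero with support T, τ > 0, and g ∈ ℝ^d be arbitrary. Then the squared Euclidean distance from g to the dilated subdifferential τ·∂‖·‖_{1,w}(x₀) equals Σ_{j∈T} (g(j) − sgn(x₀(j)) w_j τ)² + Σ_{j∉T} pos(|g(j)| − w_j τ)², where pos(x) = max(x,0). -/

import Mathlib

/-!
The weighted ℓ1-norm is separable, so its subgradient inequality splits coordinatewise:
`τ • ∂‖·‖_{1,w}(x₀)` is the product of the points `sgn(x₀ j) w_j τ` for `j ∈ T` and the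
intervals `[-w_j τ, w_j τ]` for `j ∉ T`. The squared Euclidean distance to a product of closed
sets is the sum of the squared coordinatewise distances, and the distance from `g j` to
`[-c, c]` is `pos(|g j| - c)`.
-/

open MeasureTheory ProbabilityTheory
open scoped Pointwise BigOperators

noncomputable section

/-- The weighted ℓ1-norm `‖x‖_{1,w} = ∑ i, w i * |x i|`. -/
def wnorm {d : ℕ} (w : Fin d → ℝ) (x : EuclideanSpace ℝ (Fin d)) : ℝ :=
  ∑ j, w j * |x j|

/-- The subdifferential of a convex function `f` at `x₀`: the set of `p` with
`f (x₀ + v) ≥ f x₀ + ⟨p, v⟩` for all `v`. -/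
def subdiff {d : ℕ} (f : EuclideanSpace ℝ (Fin d) → ℝ) (x₀ : EuclideanSpace ℝ (Fin d)) :
    Set (EuclideanSpace ℝ (Fin d)) :=
  {p | ∀ v, f x₀ + @inner ℝ _ _ p v ≤ f (x₀ + v)}

open Metric Set

namespace Real

lemma sign_mul_self_eq_abs (x : ℝ) : sign x * x = |x| := by
  rcases lt_trichotomy x 0 with hx | rfl | hx
  · simp [sign_of_neg hx, abs_of_neg hx]
  · simp
  · simp [sign_of_pos hx, abs_of_pos hx]

lemma sign_mul_le_abs (x y : ℝ) : sign x * y ≤ |y| := by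
  rcases sign_apply_eq x with h | h | h <;> rw [h]
  · simpa using neg_le_abs y
  · simp
  · simpa using le_abs_self y

end Real

lemma forall_mul_le_mul_abs_iff {c p : ℝ} : (∀ t, p * t ≤ c * |t|) ↔ |p| ≤ c := by
  refine ⟨fun h => abs_le.2 ⟨neg_le.1 (by simpa using h (-1)), by simpa using h 1⟩,
    fun h t => ?_⟩
  calc p * t ≤ |p| * |t| := (le_abs_self _).trans (abs_mul p t).le
    _ ≤ c * |t| := mul_le_mul_of_nonneg_right h (abs_nonneg t)

lemma forall_add_mul_le_mul_abs_add_iff {c x p : ℝ} (hc : 0 ≤ c) (hx : x ≠ 0) :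
    (∀ t, c * |x| + p * t ≤ c * |x + t|) ↔ p = Real.sign x * c := by
  constructor
  · intro h
    -- testing with `t = x` and `t = -x` forces `p * x = c * |x|`
    have h₁ := h x
    have h₂ := h (-x)
    rw [← two_mul, abs_mul, abs_two] at h₁
    simp only [add_neg_cancel, abs_zero, mul_zero] at h₂
    refine mul_right_cancel₀ hx ?_
    rw [mul_right_comm, Real.sign_mul_self_eq_abs]
    linarith
  · rintro rfl t
    have := mul_le_mul_of_nonneg_left (Real.sign_mul_le_abs x (x + t)) hc
    rw [← Real.sign_mul_self_eq_abs]
    linarith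

lemma infDist_Icc_neg_self (g : ℝ) {c : ℝ} (hc : 0 ≤ c) :
    infDist g (Icc (-c) c) = max (|g| - c) 0 := by
  rcases lt_or_ge c |g| with hg | hg
  · rw [max_eq_left (by linarith)]
    obtain ⟨y, hy, hgy⟩ : ∃ y ∈ Icc (-c) c, dist g y = |g| - c := by
      rcases le_or_gt 0 g with h₀ | h₀
      · rw [abs_of_nonneg h₀] at hg ⊢
        exact ⟨c, right_mem_Icc.2 (by linarith),
          by rw [Real.dist_eq, abs_of_nonneg (by linarith)]⟩
      · rw [abs_of_neg h₀] at hg ⊢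
        exact ⟨-c, left_mem_Icc.2 (by linarith),
          by rw [Real.dist_eq, abs_of_neg (by linarith)]; ring⟩
    refine le_antisymm (hgy ▸ infDist_le_dist_of_mem hy) ((le_infDist ⟨y, hy⟩).2 fun z hz => ?_)
    rw [Real.dist_eq]
    linarith [abs_sub_abs_le_abs_sub g z, abs_le.2 hz]
  · rw [max_eq_right (by linarith), infDist_zero_of_mem (s := Icc (-c) c) (abs_le.1 hg)]

lemma sq_infDist_setOf_forall_mem {ι : Type*} [Fintype ι] {β : ι → Type*}
    [∀ j, SeminormedAddCommGroup (β j)] [∀ j, ProperSpace (β j)] {I : ∀ j, Set (β j)}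
    (hI : ∀ j, IsClosed (I j)) (hne : ∀ j, (I j).Nonempty) (g : PiLp 2 β) :
    infDist g {p : PiLp 2 β | ∀ j, p j ∈ I j} ^ 2 = ∑ j, infDist (g j) (I j) ^ 2 := by
  choose q hq hdist using fun j => (hI j).exists_infDist_eq_dist (hne j) (g j)
  have hqI : WithLp.toLp 2 q ∈ {p : PiLp 2 β | ∀ j, p j ∈ I j} := hq
  suffices infDist g {p : PiLp 2 β | ∀ j, p j ∈ I j} = dist g (WithLp.toLp 2 q) by
    rw [this, PiLp.dist_eq_of_L2, Real.sq_sqrt (by positivity)]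
    simp [hdist]
  refine le_antisymm (infDist_le_dist_of_mem hqI) ((le_infDist ⟨_, hqI⟩).2 fun p hp => ?_)
  rw [PiLp.dist_eq_of_L2, PiLp.dist_eq_of_L2]
  gcongr with j
  simpa [← hdist] using infDist_le_dist_of_mem (x := g j) (hp j)

lemma mem_subdiff_wnorm_iff {d : ℕ} (w : Fin d → ℝ) (x₀ p : EuclideanSpace ℝ (Fin d)) :
    p ∈ subdiff (wnorm w) x₀ ↔ ∀ j t, w j * |x₀ j| + p j * t ≤ w j * |x₀ j + t| := by
  constructor
  · intro hp j t
    have hdiff : wnorm w (x₀ + EuclideanSpace.single j t) - wnorm w x₀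
        = w j * |x₀ j + t| - w j * |x₀ j| := by
      rw [wnorm, wnorm, ← Finset.sum_sub_distrib,
        Finset.sum_eq_single j (fun i _ hij => by simp [hij]) (by simp)]
      simp
    have h := hp (EuclideanSpace.single j t)
    rw [EuclideanSpace.inner_single_right, conj_trivial] at h
    linarith
  · intro hp v
    rw [wnorm, wnorm, PiLp.inner_apply, ← Finset.sum_add_distrib]
    exact Finset.sum_le_sum fun j _ => by simpa [mul_comm (v j)] using hp j (v j)

lemma smul_subdiff_wnorm {d : ℕ} {w : Fin d → ℝ} (hw : ∀ i, 0 ≤ w i)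
    (x₀ : EuclideanSpace ℝ (Fin d)) {τ : ℝ} (hτ : 0 < τ) :
    τ • subdiff (wnorm w) x₀ = {p | ∀ j, p j ∈ if x₀ j = 0 then Icc (-(w j * τ)) (w j * τ)
      else {Real.sign (x₀ j) * w j * τ}} := by
  ext p
  rw [mem_smul_set_iff_inv_smul_mem₀ hτ.ne', mem_subdiff_wnorm_iff, mem_ofPred_eq]
  refine forall_congr' fun j => ?_
  simp only [PiLp.smul_apply, smul_eq_mul]
  split_ifs with hx
  · simp only [hx, abs_zero, mul_zero, zero_add, forall_mul_le_mul_abs_iff, abs_mul,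
      abs_inv, abs_of_pos hτ, inv_mul_le_iff₀ hτ, mem_Icc, ← abs_le, mul_comm τ]
  · rw [forall_add_mul_le_mul_abs_add_iff (hw j) hx, mem_singleton_iff,
      inv_mul_eq_iff_eq_mul₀ hτ.ne', mul_comm τ]

theorem sq_dist_to_dilated_subdifferential {d : ℕ}
    (w : Fin d → ℝ) (hw : ∀ i, 0 < w i)
    (x₀ : EuclideanSpace ℝ (Fin d))
    (τ : ℝ) (hτ : 0 < τ) (g : EuclideanSpace ℝ (Fin d)) :
    Metric.infDist g (τ • subdiff (wnorm w) x₀) ^ 2 =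
      ∑ j ∈ Finset.univ.filter (fun j => x₀ j ≠ 0),
          (g j - Real.sign (x₀ j) * w j * τ) ^ 2
        + ∑ j ∈ Finset.univ.filter (fun j => x₀ j = 0),
            max (|g j| - w j * τ) 0 ^ 2 := by
  have hwτ : ∀ j, 0 ≤ w j * τ := fun j => (mul_pos (hw j) hτ).le
  rw [smul_subdiff_wnorm (fun i => (hw i).le) x₀ hτ, sq_infDist_setOf_forall_mem
    (fun j => by split_ifs <;> simp [isClosed_Icc])
    (fun j => by split_ifs <;> simp [hwτ j, neg_le_self_iff])]
  have hcoord : ∀ j, infDist (g j) (if x₀ j = 0 then Icc (-(w j * τ)) (w j * τ)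
      else {Real.sign (x₀ j) * w j * τ}) ^ 2 = if x₀ j = 0 then max (|g j| - w j * τ) 0 ^ 2
      else (g j - Real.sign (x₀ j) * w j * τ) ^ 2 := fun j => by
    split_ifs
    · rw [infDist_Icc_neg_self _ (hwτ j)]
    · rw [infDist_singleton, Real.dist_eq, sq_abs]
  rw [Finset.sum_congr rfl fun j _ => hcoord j, Finset.sum_ite, add_comm]

end
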